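/- (i) For all real numbers εX, εY, x₂, y₁ the following polynomial identity holds: (1−εY)·x₂·(−1+εX(−1+y₁)+3y₁) + 2(−1+x₂)·(−1+εX(−1+y₁)+3y₁) + (1+εX)·(2+(−3+εY)x₂)·(−1+y₁) + 2·(2+(−3+εY)x₂)·y₁ = 0 (this says that the Lyapunov function V_a is constant along the flow restricted to the invariant plane {x₁ = 0, y₁ + y₂ = 1}). (ii) For εX, εY ∈ (−1,1), the function V_a(x₂, y₁) := (1−εY)·log(1−x₂) + 2·log x₂ + (1+εX)·log y₁ + 2·log(1−y₁) on (0,1)×(0,1) satisfies V_a(x₂, y₁) ≤ V_a(2/(3−εY), (1+εX)/(3+εX)) for all x₂, y₁ ∈ (0,1), with equality if and only if x₂ = 2/(3−εY) and y₁ = (1+εX)/(3+εX). -/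

import Mathlib

/-- The Lyapunov function `V_a` on the invariant plane `{x₁ = 0, y₁ + y₂ = 1}`. -/
noncomputable def Va (εX εY x₂ y₁ : ℝ) : ℝ :=
  (1 - εY) * Real.log (1 - x₂) + 2 * Real.log x₂ +
    (1 + εX) * Real.log y₁ + 2 * Real.log (1 - y₁)

lemma key (a b x : ℝ) (ha : 0 < a) (hb : 0 < b) (hx0 : 0 < x) (hx1 : x < 1) :
    a * Real.log x + b * Real.log (1 - x) ≤
      a * Real.log (a / (a + b)) + b * Real.log (b / (a + b)) ∧
    (a * Real.log x + b * Real.log (1 - x) =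
      a * Real.log (a / (a + b)) + b * Real.log (b / (a + b)) ↔ x = a / (a + b)) := by
  have hab : 0 < a + b := by linarith
  set p : ℝ := a / (a + b) with hp
  have hp0 : 0 < p := by positivity
  have hp1 : p < 1 := by
    rw [hp, div_lt_one hab]; linarith
  have h1p : 1 - p = b / (a + b) := by
    rw [hp]; field_simp; ring
  have h1x : 0 < 1 - x := by linarith
  have e1 : Real.log x = Real.log (x / p) + Real.log p := by
    rw [Real.log_div hx0.ne' hp0.ne']; ring
  have e2 : Real.log (1 - x) = Real.log ((1 - x) / (1 - p)) + Real.log (1 - p) := by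
    rw [Real.log_div h1x.ne' (by linarith : (1:ℝ) - p ≠ 0)]; ring
  have hsum : a * (x / p - 1) + b * ((1 - x) / (1 - p) - 1) = 0 := by
    rw [hp, h1p]; field_simp; ring
  have l1 : Real.log (x / p) ≤ x / p - 1 :=
    Real.log_le_sub_one_of_pos (by positivity)
  have l2 : Real.log ((1 - x) / (1 - p)) ≤ (1 - x) / (1 - p) - 1 :=
    Real.log_le_sub_one_of_pos (div_pos h1x (by linarith))
  have hle : a * Real.log x + b * Real.log (1 - x) ≤
      a * Real.log p + b * Real.log (1 - p) := by
    rw [e1, e2]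
    nlinarith [mul_le_mul_of_nonneg_left l1 ha.le, mul_le_mul_of_nonneg_left l2 hb.le]
  refine ⟨by rw [← h1p]; exact hle, ?_, ?_⟩
  · intro heq
    by_contra hne
    have hxp : x / p ≠ 1 := by
      intro h
      exact hne ((div_eq_one_iff_eq hp0.ne').mp h)
    have l1' : Real.log (x / p) < x / p - 1 :=
      Real.log_lt_sub_one_of_pos (div_pos hx0 hp0) hxp
    have hlt : a * Real.log x + b * Real.log (1 - x) <
        a * Real.log p + b * Real.log (1 - p) := by
      rw [e1, e2]
      nlinarith [mul_lt_mul_of_pos_left l1' ha, mul_le_mul_of_nonneg_left l2 hb.le]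
    rw [h1p] at hlt
    linarith [heq.le, heq.ge, hlt]
  · intro h
    rw [h, h1p]

theorem stmt8 :
    (∀ εX εY x₂ y₁ : ℝ,
      (1 - εY) * x₂ * (-1 + εX * (-1 + y₁) + 3 * y₁)
        + 2 * (-1 + x₂) * (-1 + εX * (-1 + y₁) + 3 * y₁)
        + (1 + εX) * (2 + (-3 + εY) * x₂) * (-1 + y₁)
        + 2 * (2 + (-3 + εY) * x₂) * y₁ = 0) ∧
    (∀ εX εY : ℝ, εX ∈ Set.Ioo (-1:ℝ) 1 → εY ∈ Set.Ioo (-1:ℝ) 1 →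
      ∀ x₂ y₁ : ℝ, x₂ ∈ Set.Ioo (0:ℝ) 1 → y₁ ∈ Set.Ioo (0:ℝ) 1 →
        Va εX εY x₂ y₁ ≤ Va εX εY (2/(3-εY)) ((1+εX)/(3+εX)) ∧
        (Va εX εY x₂ y₁ = Va εX εY (2/(3-εY)) ((1+εX)/(3+εX)) ↔
          x₂ = 2/(3-εY) ∧ y₁ = (1+εX)/(3+εX))) := by
  constructor
  · intro εX εY x₂ y₁; ring
  · rintro εX εY ⟨hX1, hX2⟩ ⟨hY1, hY2⟩ x₂ y₁ ⟨hx0, hx1⟩ ⟨hy0, hy1⟩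
    have hA := key 2 (1 - εY) x₂ (by norm_num) (by linarith) hx0 hx1
    have hB := key (1 + εX) 2 y₁ (by linarith) (by norm_num) hy0 hy1
    have hYne : (3:ℝ) - εY ≠ 0 := by linarith
    have hXne : (3:ℝ) + εX ≠ 0 := by linarith
    have eA1 : (2:ℝ) / (2 + (1 - εY)) = 2 / (3 - εY) := by ring_nf
    have h2Y : (2:ℝ) + (1 - εY) ≠ 0 := by linarith
    have h2X : (1:ℝ) + εX + 2 ≠ 0 := by linarith
    have eA2 : (1 - εY) / (2 + (1 - εY)) = 1 - 2 / (3 - εY) := by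
      field_simp
      ring
    have eB1 : (1 + εX) / ((1 + εX) + 2) = (1 + εX) / (3 + εX) := by ring_nf
    have eB2 : (2:ℝ) / ((1 + εX) + 2) = 1 - (1 + εX) / (3 + εX) := by
      field_simp
      ring
    rw [eA1, eA2] at hA
    rw [eB1, eB2] at hB
    obtain ⟨hAle, hAiff⟩ := hA
    obtain ⟨hBle, hBiff⟩ := hB
    have hVa : ∀ x y : ℝ, Va εX εY x y =
        (2 * Real.log x + (1 - εY) * Real.log (1 - x)) +
        ((1 + εX) * Real.log y + 2 * Real.log (1 - y)) := by
      intro x y; simp [Va]; ring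
    rw [hVa, hVa]
    constructor
    · linarith
    · constructor
      · intro h
        have h1 : 2 * Real.log x₂ + (1 - εY) * Real.log (1 - x₂) =
            2 * Real.log (2 / (3 - εY)) + (1 - εY) * Real.log (1 - 2 / (3 - εY)) := by
          linarith
        have h2 : (1 + εX) * Real.log y₁ + 2 * Real.log (1 - y₁) =
            (1 + εX) * Real.log ((1 + εX) / (3 + εX)) +
              2 * Real.log (1 - (1 + εX) / (3 + εX)) := by
          linarith
        exact ⟨hAiff.mp h1, hBiff.mp h2⟩
      · rintro ⟨h1, h2⟩
        rw [h1, h2]
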